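/- arXiv:1911.02196 — 4 statements merged into one kernel-verified Lean document; each statement's English description precedes it below -/
import Mathlib

section
/- If G is a cubic graph that is properly 3-edge colourable, and Z is a 3-element vertex set disjoint from V(G), then the join graph \overline{K_Z} ∨ G (the graph on Z ∪ V(G) with edge set E(G) together with all edges between Z and V(G), and no edges inside Z) admits a decomposition into triangles, i.e. a set of triangles such that every edge lies in exactly one triangle. -/
/-- A triangle of a simple graph, represented as a 3-element vertex set. -/
def IsTriangleOf {V : Type*} (G : SimpleGraph V) (T : Finset V) : Prop :=
  T.card = 3 ∧ ∀ x ∈ T, ∀ y ∈ T, x ≠ y → G.Adj x y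

/-- A K₃-decomposition: every edge lies in exactly one triangle of the family. -/
def IsTriangleDecomposition {V : Type*} (G : SimpleGraph V) (D : Set (Finset V)) : Prop :=
  (∀ T ∈ D, IsTriangleOf G T) ∧
  ∀ x y : V, G.Adj x y → ∃! T, T ∈ D ∧ x ∈ T ∧ y ∈ T

/-- A K₃-packing: pairwise edge-disjoint triangles. -/
def IsTrianglePacking {V : Type*} (G : SimpleGraph V) (D : Set (Finset V)) : Prop :=
  (∀ T ∈ D, IsTriangleOf G T) ∧
  ∀ x y : V, x ≠ y → ∀ T₁ ∈ D, ∀ T₂ ∈ D,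
    x ∈ T₁ → y ∈ T₁ → x ∈ T₂ → y ∈ T₂ → T₁ = T₂

/-- A proper edge colouring: distinct incident edges receive distinct colours. -/
def IsProperEdgeColoring {V β : Type*} (G : SimpleGraph V) (c : Sym2 V → β) : Prop :=
  ∀ e₁ ∈ G.edgeSet, ∀ e₂ ∈ G.edgeSet, e₁ ≠ e₂ → (∃ v, v ∈ e₁ ∧ v ∈ e₂) → c e₁ ≠ c e₂

/-- The join `\overline{K_Z} ∨ G`, where `Z = Fin 3` is a 3-element vertex set
disjoint from `V(G)`: edges of `G`, all edges between `Z` and `V(G)`, none inside `Z`. -/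
def barJoin {V : Type*} (G : SimpleGraph V) : SimpleGraph (Fin 3 ⊕ V) where
  Adj x y := match x, y with
    | Sum.inl _, Sum.inl _ => False
    | Sum.inl _, Sum.inr _ => True
    | Sum.inr _, Sum.inl _ => True
    | Sum.inr a, Sum.inr b => G.Adj a b
  symm := by
    constructor
    intro x y h
    cases x <;> cases y <;> simp_all
    exact h.symm
  loopless := by
    constructor
    intro x
    cases x <;> simp_all

/-- `G` is cubic: every vertex has degree 3. -/
def IsCubic {V : Type*} (G : SimpleGraph V) : Prop :=
  ∀ v : V, (G.neighborSet v).ncard = 3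

/-!
Use the three vertices of `Z` as the colours of a proper edge colouring `c` of `G`, and take
for every edge `ab` of `G` the triangle `{c(ab), a, b}`. Each edge of `G` lies in exactly its
own triangle. An edge `z a` with `z ∈ Z` lies in the triangle of an edge `ab` iff `c(ab) = z`;
since `a` has degree 3 and its edges get distinct colours, every colour occurs exactly once at
`a`, so there is exactly one such triangle.
-/

section

variable {V β : Type*} {G : SimpleGraph V}

theorem IsProperEdgeColoring.injOn_neighborSet {c : Sym2 V → β} (hc : IsProperEdgeColoring G c)
    (a : V) : Set.InjOn (fun b => c s(a, b)) (G.neighborSet a) := by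
  intro b₁ h₁ b₂ h₂ h
  by_contra hne
  exact hc _ h₁ _ h₂ (by rwa [Ne, Sym2.congr_right]) ⟨a, Sym2.mem_mk_left _ _,
    Sym2.mem_mk_left _ _⟩ h

theorem IsProperEdgeColoring.existsUnique_adj_color_eq [Finite β] {c : Sym2 V → β}
    (hc : IsProperEdgeColoring G c) {a : V} (ha : (G.neighborSet a).ncard = Nat.card β) (i : β) :
    ∃! b, G.Adj a b ∧ c s(a, b) = i := by
  have himage : (fun b => c s(a, b)) '' G.neighborSet a = Set.univ := by
    refine Set.eq_of_subset_of_ncard_le (Set.subset_univ _) ?_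
    rw [Set.ncard_univ, (hc.injOn_neighborSet a).ncard_image, ha]
  obtain ⟨b, hb, hbi⟩ := himage ▸ Set.mem_univ i
  exact ⟨b, ⟨hb, hbi⟩, fun b' ⟨hb', hb'i⟩ =>
    hc.injOn_neighborSet a hb' hb (hb'i.trans hbi.symm)⟩

namespace barJoin

variable [DecidableEq V] {c : Sym2 V → Fin 3} {a b a' b' : V}

def colorTriangle (c : Sym2 V → Fin 3) (a b : V) : Finset (Fin 3 ⊕ V) :=
  {Sum.inl (c s(a, b)), Sum.inr a, Sum.inr b}

def colorTriangles (G : SimpleGraph V) (c : Sym2 V → Fin 3) : Set (Finset (Fin 3 ⊕ V)) :=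
  {T | ∃ a b, G.Adj a b ∧ T = colorTriangle c a b}

theorem colorTriangle_comm (c : Sym2 V → Fin 3) (a b : V) :
    colorTriangle c a b = colorTriangle c b a := by
  rw [colorTriangle, colorTriangle, Sym2.eq_swap, Finset.pair_comm]

theorem colorTriangle_mem_colorTriangles (hab : G.Adj a b) :
    colorTriangle c a b ∈ colorTriangles G c :=
  ⟨a, b, hab, rfl⟩

theorem isTriangleOf_colorTriangle (hab : G.Adj a b) :
    IsTriangleOf (barJoin G) (colorTriangle c a b) := by
  constructor
  · rw [colorTriangle, Finset.card_insert_of_notMem (by simp),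
      Finset.card_insert_of_notMem (by simp [hab.ne]), Finset.card_singleton]
  · intro x hx y hy hxy
    simp only [colorTriangle, Finset.mem_insert, Finset.mem_singleton] at hx hy
    rcases hx with rfl | rfl | rfl <;> rcases hy with rfl | rfl | rfl
    all_goals first
      | exact absurd rfl hxy
      | exact trivial
      | exact hab
      | exact hab.symm

theorem colorTriangle_eq_of_inr_mem (hab : G.Adj a b)
    (ha : Sum.inr a ∈ colorTriangle c a' b') (hb : Sum.inr b ∈ colorTriangle c a' b') :
    colorTriangle c a' b' = colorTriangle c a b := by
  simp only [colorTriangle, Finset.mem_insert, Finset.mem_singleton, Sum.inr.injEq,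
    reduceCtorEq, false_or] at ha hb
  rcases ha with rfl | rfl <;> rcases hb with rfl | rfl
  · exact absurd rfl hab.ne
  · rfl
  · exact colorTriangle_comm c _ _
  · exact absurd rfl hab.ne

theorem existsUnique_colorTriangle_inr_inr (hab : G.Adj a b) :
    ∃! T, T ∈ colorTriangles G c ∧ Sum.inr a ∈ T ∧ Sum.inr b ∈ T := by
  refine ⟨colorTriangle c a b, ⟨colorTriangle_mem_colorTriangles hab, by simp [colorTriangle],
    by simp [colorTriangle]⟩, ?_⟩
  rintro _ ⟨⟨a', b', -, rfl⟩, ha, hb⟩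
  exact colorTriangle_eq_of_inr_mem hab ha hb

theorem existsUnique_colorTriangle_inl_inr (hcubic : IsCubic G) (hc : IsProperEdgeColoring G c)
    (i : Fin 3) (a : V) :
    ∃! T, T ∈ colorTriangles G c ∧ Sum.inl i ∈ T ∧ Sum.inr a ∈ T := by
  obtain ⟨b, ⟨hab, rfl⟩, hunique⟩ :=
    hc.existsUnique_adj_color_eq ((hcubic a).trans (Nat.card_fin 3).symm) i
  refine ⟨colorTriangle c a b, ⟨colorTriangle_mem_colorTriangles hab, by simp [colorTriangle],
    by simp [colorTriangle]⟩, ?_⟩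
  rintro _ ⟨⟨a', b', hab', rfl⟩, hi, ha⟩
  simp only [colorTriangle, Finset.mem_insert, Finset.mem_singleton, Sum.inl.injEq,
    Sum.inr.injEq, reduceCtorEq, or_false, false_or] at hi ha
  rcases ha with rfl | rfl
  · rw [hunique b' ⟨hab', hi.symm⟩]
  · rw [hunique a' ⟨hab'.symm, by rw [hi, Sym2.eq_swap]⟩, colorTriangle_comm]

theorem isTriangleDecomposition_colorTriangles (hcubic : IsCubic G)
    (hc : IsProperEdgeColoring G c) :
    IsTriangleDecomposition (barJoin G) (colorTriangles G c) := by
  refine ⟨fun _ ⟨_, _, hab, hT⟩ => hT ▸ isTriangleOf_colorTriangle hab, ?_⟩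
  rintro (i | a) (j | b) hxy
  · exact hxy.elim
  · exact existsUnique_colorTriangle_inl_inr hcubic hc i b
  · simpa only [and_comm (a := Sum.inr a ∈ _)] using
      existsUnique_colorTriangle_inl_inr hcubic hc j a
  · exact existsUnique_colorTriangle_inr_inr hxy

end barJoin

end

/-- If `G` is a cubic graph that is properly 3-edge colourable and `Z` is a
3-element vertex set disjoint from `V(G)`, then `\overline{K_Z} ∨ G` has a
K₃-decomposition. -/
theorem stmt0 {V : Type*} (G : SimpleGraph V) (hcubic : IsCubic G)
    (hcol : ∃ c : Sym2 V → Fin 3, IsProperEdgeColoring G c) :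
    ∃ D : Set (Finset (Fin 3 ⊕ V)), IsTriangleDecomposition (barJoin G) D := by
  classical
  obtain ⟨c, hc⟩ := hcol
  exact ⟨_, barJoin.isTriangleDecomposition_colorTriangles hcubic hc⟩
end

section
/- If G is a cubic graph that is not properly 3-edge colourable, and Z is a 3-element vertex set disjoint from V(G), then for every triangle packing of \overline{K_Z} ∨ G (a set of edge-disjoint triangles), some edge incident with a vertex of Z is not covered by any triangle of the packing. Equivalently, \overline{K_Z} ∨ G has no K_3-decomposition and moreover no triangle packing covers all edges meeting Z. -/
/-!
Suppose a packing `D` of `\overline{K_Z} ∨ G` covers every edge meeting `Z`. A triangle through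
`z ∈ Z` contains no other vertex of `Z`, so it is `{z, v, w}` for an edge `vw` of `G`. At a vertex
`v` the three edges `zv` therefore lie in triangles `{z, v, f z}`, and edge-disjointness along
`v (f z)` makes `f` injective, so by cubicity `f : Z → N(v)` is a bijection. Hence every edge `vw`
of `G` is the base of a triangle of `D` with apex in `Z`, and colouring `vw` by that apex is
proper, since two triangles with the same apex `z` at `v` share the edge `zv`.
-/

namespace Finset

variable {α : Type*}

lemma exists_mem_ne_ne_of_two_lt_card {s : Finset α} (hs : 2 < s.card) (x y : α) :
    ∃ w ∈ s, w ≠ x ∧ w ≠ y := by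
  classical
  obtain ⟨w, hw⟩ : ((s.erase x).erase y).Nonempty := by
    rw [← Finset.card_pos]
    have h₁ := pred_card_le_card_erase (s := s) (a := x)
    have h₂ := pred_card_le_card_erase (s := s.erase x) (a := y)
    omega
  simp only [mem_erase] at hw
  exact ⟨w, hw.2.2, hw.2.1, hw.1⟩

lemma eq_of_mem_of_card_le_three {s : Finset α} (hs : s.card ≤ 3) {x y w w' : α}
    (hxy : x ≠ y) (hwx : w ≠ x) (hwy : w ≠ y) (hw'x : w' ≠ x) (hw'y : w' ≠ y)
    (hx : x ∈ s) (hy : y ∈ s) (hw : w ∈ s) (hw' : w' ∈ s) : w = w' := by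
  classical
  by_contra hww'
  have hsub : ({x, y, w, w'} : Finset α) ⊆ s := by
    intro a ha
    simp only [mem_insert, mem_singleton] at ha
    rcases ha with rfl | rfl | rfl | rfl <;> assumption
  have hcard : ({x, y, w, w'} : Finset α).card = 4 := by
    rw [card_insert_of_notMem (by simp [hxy, hwx.symm, hw'x.symm]),
      card_insert_of_notMem (by simp [hwy.symm, hw'y.symm]),
      card_insert_of_notMem (by simp [hww']), card_singleton]
  have := card_le_card hsub
  omega

end Finset

section

variable {V : Type*} {G : SimpleGraph V}

lemma IsCubic.range_eq_neighborSet (hG : IsCubic G) {v : V} {f : Fin 3 → V}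
    (hf : Function.Injective f) (hadj : ∀ i, G.Adj v (f i)) :
    Set.range f = G.neighborSet v := by
  have hfin : (G.neighborSet v).Finite :=
    Set.finite_of_ncard_pos (by rw [hG v]; norm_num)
  refine Set.eq_of_subset_of_ncard_le (Set.range_subset_iff.mpr hadj) ?_ hfin
  rw [hG v, Set.ncard_range_of_injective hf, Nat.card_eq_fintype_card, Fintype.card_fin]

lemma exists_isProperEdgeColoring_of_forall_exists {β : Type*} [Nonempty β]
    (P : β → Sym2 V → Prop) (hex : ∀ v w, G.Adj v w → ∃ i, P i s(v, w))
    (huniq : ∀ i v a b, G.Adj v a → G.Adj v b → P i s(v, a) → P i s(v, b) → a = b) :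
    ∃ c : Sym2 V → β, IsProperEdgeColoring G c := by
  classical
  refine ⟨fun e => if h : ∃ i, P i e then h.choose else Classical.arbitrary β, ?_⟩
  rintro e₁ he₁ e₂ he₂ hne ⟨v, hv₁, hv₂⟩ hc
  obtain ⟨a, rfl⟩ := Sym2.mem_iff_exists.mp hv₁
  obtain ⟨b, rfl⟩ := Sym2.mem_iff_exists.mp hv₂
  have ha : ∃ i, P i s(v, a) := hex v a he₁
  have hb : ∃ i, P i s(v, b) := hex v b he₂
  simp only [dif_pos ha, dif_pos hb] at hc
  have hPa := ha.choose_spec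
  rw [hc] at hPa
  exact hne (by rw [huniq _ v a b he₁ he₂ hPa hb.choose_spec])

namespace IsTriangleOf

variable {T : Finset (Fin 3 ⊕ V)}

lemma inl_eq_of_mem (hT : IsTriangleOf (barJoin G) T) {z z' : Fin 3}
    (hz : Sum.inl z ∈ T) (hz' : Sum.inl z' ∈ T) : z = z' := by
  by_contra hne
  exact hT.2 _ hz _ hz' (by simpa using hne)

lemma exists_adj_inr_mem (hT : IsTriangleOf (barJoin G) T) {z : Fin 3} {v : V}
    (hz : Sum.inl z ∈ T) (hv : Sum.inr v ∈ T) : ∃ u, G.Adj v u ∧ Sum.inr u ∈ T := by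
  obtain ⟨x, hx, hxz, hxv⟩ :=
    Finset.exists_mem_ne_ne_of_two_lt_card (by rw [hT.1]; norm_num) (Sum.inl z) (Sum.inr v)
  rcases x with z' | u
  · exact absurd (congrArg Sum.inl (hT.inl_eq_of_mem hx hz)) hxz
  · exact ⟨u, hT.2 _ hv _ hx hxv.symm, hx⟩

end IsTriangleOf

def IsApex (D : Set (Finset (Fin 3 ⊕ V))) (z : Fin 3) (e : Sym2 V) : Prop :=
  ∃ T ∈ D, Sum.inl z ∈ T ∧ ∀ a ∈ e, Sum.inr a ∈ T

namespace IsTrianglePacking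

variable {D : Set (Finset (Fin 3 ⊕ V))}

lemma eq_of_isApex (hD : IsTrianglePacking (barJoin G) D) {z : Fin 3} {v a b : V}
    (ha : G.Adj v a) (hb : G.Adj v b) (hza : IsApex D z s(v, a)) (hzb : IsApex D z s(v, b)) :
    a = b := by
  obtain ⟨T, hT, hzT, hvaT⟩ := hza
  obtain ⟨T', hT', hzT', hvbT'⟩ := hzb
  have hvT : Sum.inr v ∈ T := hvaT v (Sym2.mem_mk_left v a)
  obtain rfl : T = T' :=
    hD.2 _ _ Sum.inl_ne_inr T hT T' hT' hzT hvT hzT' (hvbT' v (Sym2.mem_mk_left v b))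
  have hne : ∀ u, G.Adj v u → (Sum.inr u : Fin 3 ⊕ V) ≠ Sum.inr v :=
    fun u hu => Sum.inr_injective.ne hu.ne.symm
  exact Sum.inr_injective <| Finset.eq_of_mem_of_card_le_three (hD.1 T hT).1.le
    Sum.inl_ne_inr Sum.inr_ne_inl (hne a ha) Sum.inr_ne_inl (hne b hb)
    hzT hvT (hvaT a (Sym2.mem_mk_right v a)) (hvbT' b (Sym2.mem_mk_right v b))

lemma exists_isApex (hD : IsTrianglePacking (barJoin G) D) (hG : IsCubic G)
    (hcov : ∀ (z : Fin 3) (v : V), ∃ T ∈ D, Sum.inl z ∈ T ∧ Sum.inr v ∈ T)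
    {v w : V} (hvw : G.Adj v w) : ∃ z, IsApex D z s(v, w) := by
  choose T hTD hzT hvT using hcov
  have hnbr z := (hD.1 _ (hTD z v)).exists_adj_inr_mem (hzT z v) (hvT z v)
  choose f hadj hfT using hnbr
  have hf : Function.Injective f := by
    intro z z' hzz'
    have hvf : (Sum.inr v : Fin 3 ⊕ V) ≠ Sum.inr (f z) := Sum.inr_injective.ne (hadj z).ne
    have hTT : T z v = T z' v :=
      hD.2 _ _ hvf _ (hTD z v) _ (hTD z' v) (hvT z v) (hfT z) (hvT z' v) (hzz' ▸ hfT z')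
    exact (hD.1 _ (hTD z v)).inl_eq_of_mem (hzT z v) (hTT ▸ hzT z' v)
  obtain ⟨z, rfl⟩ : w ∈ Set.range f := (hG.range_eq_neighborSet hf hadj).symm ▸ hvw
  refine ⟨z, T z v, hTD z v, hzT z v, fun a ha => ?_⟩
  rcases Sym2.mem_iff.mp ha with rfl | rfl
  exacts [hvT z a, hfT z]

end IsTrianglePacking

end

/-- If `G` is cubic and not 3-edge colourable, then every triangle packing
of `\overline{K_Z} ∨ G` leaves some edge incident with a vertex of `Z` uncovered. -/
theorem stmt1 {V : Type*} (G : SimpleGraph V) (hcubic : IsCubic G)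
    (hncol : ¬ ∃ c : Sym2 V → Fin 3, IsProperEdgeColoring G c) :
    ∀ D : Set (Finset (Fin 3 ⊕ V)), IsTrianglePacking (barJoin G) D →
      ∃ (z : Fin 3) (x : Fin 3 ⊕ V), (barJoin G).Adj (Sum.inl z) x ∧
        ∀ T ∈ D, ¬(Sum.inl z ∈ T ∧ x ∈ T) := by
  intro D hD
  by_contra hcov
  push Not at hcov
  exact hncol <| exists_isProperEdgeColoring_of_forall_exists (IsApex D)
    (fun _ _ hvw => hD.exists_isApex hcubic (fun z v => hcov z (Sum.inr v) trivial) hvw)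
    (fun _ _ _ _ ha hb => hD.eq_of_isApex ha hb)
end

section
/- Suppose a triangle packing P of \overline{K_Z} ∨ G (where G is cubic of order n and |Z| = 3, Z disjoint from V(G)) covers every edge incident with a vertex of Z. Then defining γ(xy) = z for each edge xy of G, where z is the unique element of Z with {x,y,z} ∈ P, gives a well-defined proper 3-edge colouring of G. -/
/-!
Fix a vertex `x` of `G`. Every `z ∈ Z` lies with `x` in a triangle of `P`, whose third vertex is
a neighbour `w z` of `x`. Two such triangles sharing the edge `xw` coincide, and a triangle has no
two vertices of `Z`, so `z ↦ w z` is injective; as `x` has exactly three neighbours, it is a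
bijection onto them. Hence every edge `xy` of `G` lies in a triangle `{x, y, z}` of `P`, and
two edges at a common vertex with the same colour `z` would share the edge from that vertex to `z`.
-/

open Sum

namespace Finset

variable {α : Type*} [DecidableEq α]

theorem exists_mem_ne_ne_of_two_lt_card_s3 {T : Finset α} (hT : 2 < T.card) (a b : α) :
    ∃ c ∈ T, c ≠ a ∧ c ≠ b := by
  have : 0 < ((T.erase a).erase b).card := by
    have := (T.erase a).pred_card_le_card_erase (a := b)
    have := T.pred_card_le_card_erase (a := a)
    omega
  obtain ⟨c, hc⟩ := card_pos.mp this
  simp only [mem_erase] at hc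
  exact ⟨c, hc.2.2, hc.2.1, hc.1⟩

theorem eq_triple_of_card_eq_three {T : Finset α} (hT : T.card = 3) {a b c : α}
    (ha : a ∈ T) (hb : b ∈ T) (hc : c ∈ T) (hab : a ≠ b) (hac : a ≠ c) (hbc : b ≠ c) :
    T = {a, b, c} := by
  refine (eq_of_subset_of_card_le (by simp [insert_subset_iff, ha, hb, hc]) ?_).symm
  rw [hT, card_eq_three.mpr ⟨a, b, c, hab, hac, hbc, rfl⟩]

theorem ne_of_card_triple_eq_three {a b c : α} (h : ({a, b, c} : Finset α).card = 3) :
    a ≠ b ∧ a ≠ c ∧ b ≠ c := by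
  grind [card_le_two]

end Finset

section Packing

variable {α : Type*} [DecidableEq α] {H : SimpleGraph α} {P : Set (Finset α)}

theorem IsTrianglePacking.eq_of_triple_mem (hP : IsTrianglePacking H P) {a b c d : α}
    (hab : a ≠ b) (hc : {a, b, c} ∈ P) (hd : {a, b, d} ∈ P) : c = d := by
  have hcd := hP.2 a b hab _ hc _ hd (by simp) (by simp) (by simp) (by simp)
  have hcmem : c ∈ ({a, b, d} : Finset α) := hcd ▸ by simp
  obtain ⟨-, hca, hcb⟩ := Finset.ne_of_card_triple_eq_three (hP.1 _ hc).1
  simp only [Finset.mem_insert, Finset.mem_singleton] at hcmem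
  exact (hcmem.resolve_left hca.symm).resolve_left hcb.symm

end Packing

section BarJoin

variable {V : Type*} [DecidableEq V] {G : SimpleGraph V} {P : Set (Finset (Fin 3 ⊕ V))}

theorem IsTriangleOf.barJoin_eq_of_inl_mem {T : Finset (Fin 3 ⊕ V)}
    (hT : IsTriangleOf (barJoin G) T) {z : Fin 3} {x : V} (hz : inl z ∈ T) (hx : inr x ∈ T) :
    ∃ w, G.Adj x w ∧ T = {inr x, inr w, inl z} := by
  obtain ⟨c, hc, hcz, hcx⟩ :=
    T.exists_mem_ne_ne_of_two_lt_card_s3 (by rw [hT.1]; decide) (inl z) (inr x)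
  have hzc := hT.2 _ hz _ hc hcz.symm
  cases c with
  | inl => exact hzc.elim
  | inr w =>
    exact ⟨w, hT.2 _ hx _ hc hcx.symm,
      Finset.eq_triple_of_card_eq_three hT.1 hx hc hz hcx.symm (by simp) (by simp)⟩

theorem IsTrianglePacking.exists_inl_triple_mem (hP : IsTrianglePacking (barJoin G) P) {x y : V}
    (hx : (G.neighborSet x).ncard = 3) (hcover : ∀ z : Fin 3, ∃ T ∈ P, inl z ∈ T ∧ inr x ∈ T)
    (hxy : G.Adj x y) : ∃ z, ({inr x, inr y, inl z} : Finset (Fin 3 ⊕ V)) ∈ P := by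
  have partner (z : Fin 3) :
      ∃ w, G.Adj x w ∧ ({inr x, inr w, inl z} : Finset (Fin 3 ⊕ V)) ∈ P := by
    obtain ⟨T, hT, hzT, hxT⟩ := hcover z
    obtain ⟨w, hxw, rfl⟩ := (hP.1 T hT).barJoin_eq_of_inl_mem hzT hxT
    exact ⟨w, hxw, hT⟩
  choose w hw hwP using partner
  have hinj : Function.Injective fun z => (⟨w z, hw z⟩ : G.neighborSet x) := by
    intro z₁ z₂ h
    have hw₁₂ : w z₁ = w z₂ := congrArg Subtype.val h
    have := hP.eq_of_triple_mem (by simpa using (hw z₁).ne) (hwP z₁) (hw₁₂ ▸ hwP z₂)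
    simpa using this
  have : Finite (G.neighborSet x) := Set.finite_of_ncard_ne_zero (by omega)
  have hcard : Nat.card (G.neighborSet x) ≤ Nat.card (Fin 3) := by
    rw [Nat.card_coe_set_eq, hx, Nat.card_fin]
  obtain ⟨z, hz⟩ := (hinj.bijective_of_nat_card_le hcard).2 ⟨y, hxy⟩
  obtain rfl : w z = y := congrArg Subtype.val hz
  exact ⟨z, hwP z⟩

theorem IsTrianglePacking.isProperEdgeColoring_of_triple_mem
    (hP : IsTrianglePacking (barJoin G) P) {γ : Sym2 V → Fin 3}
    (hγ : ∀ x y, G.Adj x y → ({inr x, inr y, inl (γ s(x, y))} : Finset (Fin 3 ⊕ V)) ∈ P) :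
    IsProperEdgeColoring G γ := by
  rintro e₁ he₁ e₂ he₂ hne ⟨v, hv₁, hv₂⟩ hcol
  obtain ⟨w₁, rfl⟩ := Sym2.mem_iff_exists.mp hv₁
  obtain ⟨w₂, rfl⟩ := Sym2.mem_iff_exists.mp hv₂
  have h₁ := hγ v w₁ he₁
  have h₂ := hγ v w₂ he₂
  rw [Finset.pair_comm, hcol] at h₁
  rw [Finset.pair_comm] at h₂
  exact hne (congrArg _ (by simpa using hP.eq_of_triple_mem (by simp) h₁ h₂))

noncomputable def triangleColor (P : Set (Finset (Fin 3 ⊕ V))) (e : Sym2 V) : Fin 3 :=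
  Classical.epsilon fun z => Sym2.lift
    ⟨fun x y => ({inr x, inr y, inl z} : Finset (Fin 3 ⊕ V)) ∈ P,
      fun x y => by simp only [Finset.insert_comm]⟩ e

end BarJoin

/-- If a triangle packing `P` of `\overline{K_Z} ∨ G` (with `G` cubic and
`Z = Fin 3`) covers every edge incident with a vertex of `Z`, then setting `γ(xy)` to be
the unique `z ∈ Z` with `{x, y, z} ∈ P` yields a well-defined proper 3-edge colouring
of `G`. -/
theorem stmt3 {V : Type*} [DecidableEq V] (G : SimpleGraph V) (hcubic : IsCubic G)
    (P : Set (Finset (Fin 3 ⊕ V))) (hP : IsTrianglePacking (barJoin G) P)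
    (hcover : ∀ (z : Fin 3) (x : Fin 3 ⊕ V), (barJoin G).Adj (Sum.inl z) x →
      ∃ T ∈ P, Sum.inl z ∈ T ∧ x ∈ T) :
    ∃ γ : Sym2 V → Fin 3, IsProperEdgeColoring G γ ∧
      ∀ x y : V, G.Adj x y →
        ({Sum.inr x, Sum.inr y, Sum.inl (γ s(x, y))} : Finset (Fin 3 ⊕ V)) ∈ P := by
  have hmem (x y : V) (hxy : G.Adj x y) :
      ({inr x, inr y, inl (triangleColor P s(x, y))} : Finset (Fin 3 ⊕ V)) ∈ P :=
    Classical.epsilon_spec (hP.exists_inl_triple_mem (hcubic x) (fun z => hcover z _ trivial) hxy)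
  exact ⟨triangleColor P, hP.isProperEdgeColoring_of_triple_mem hmem, hmem⟩
end

section
/- Let w and u be positive integers with w even and u odd, and let L be an even graph of order u with |E(L)| = w(u−w+1)/2. Suppose W is a w-element set disjoint from V(L) and D is a K_3-decomposition of L ∨ K_W. Then every triangle of D contains either exactly one or exactly two vertices of V(L); moreover exactly |E(L)| triangles contain two vertices of V(L) and exactly C(w,2) triangles contain one vertex of V(L). -/
/-- The join `L ∨ K_w` with a complete graph on `w` new vertices (`Fin w`). -/
def joinK {V : Type*} (L : SimpleGraph V) (w : ℕ) : SimpleGraph (V ⊕ Fin w) where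
  Adj x y := match x, y with
    | Sum.inl a, Sum.inl b => L.Adj a b
    | Sum.inl _, Sum.inr _ => True
    | Sum.inr _, Sum.inl _ => True
    | Sum.inr a, Sum.inr b => a ≠ b
  symm := by
    refine ⟨?_⟩
    intro x y h
    cases x <;> cases y <;> simp_all
    · exact h.symm
    · exact fun h' => h h'.symm
  loopless := by
    refine ⟨?_⟩
    intro x
    cases x <;> simp_all

/-!
Count the ordered pairs of adjacent vertices of `L ∨ K_w` through the triangle of `D` containing
them. A triangle with `a` vertices in `V(L)` contains `a(3-a) ≤ 2` cross pairs with the `V(L)`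
vertex first, and `a(a-1) + (3-a)(2-a) ≥ 2` pure pairs, with equality in both exactly when
`a ∈ {1, 2}`. The hypothesis on `|E(L)|` says that there are as many pure pairs,
`2|E(L)| + w(w-1)`, as such cross pairs, `uw`, so every triangle is in the equality case. The
pure pairs inside `V(L)` then come two per triangle with `a = 2`, those inside `W` two per
triangle with `a = 1`.
-/

open Finset

namespace Finset

variable {α : Type*} (s : Finset α) (p : α → Prop) [DecidablePred p]

lemma card_filter_offDiag_and :
    #{q ∈ s.offDiag | p q.1 ∧ p q.2} = #{a ∈ s | p a} * #{a ∈ s | p a} - #{a ∈ s | p a} := by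
  rw [← offDiag_card]
  congr 1
  ext q
  simp only [mem_filter, mem_offDiag]
  tauto

lemma card_filter_offDiag_and_not :
    #{q ∈ s.offDiag | p q.1 ∧ ¬p q.2} = #{a ∈ s | p a} * #{a ∈ s | ¬p a} := by
  rw [← card_product]
  congr 1
  ext q
  simp only [mem_filter, mem_offDiag, mem_product]
  constructor
  · tauto
  · rintro ⟨⟨h1, hp1⟩, h2, hp2⟩
    exact ⟨⟨h1, h2, fun h => hp2 (h ▸ hp1)⟩, hp1, hp2⟩

end Finset

namespace IsTriangleDecomposition

variable {V : Type*} {G : SimpleGraph V} {D : Finset (Finset V)}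

lemma pairwiseDisjoint_offDiag (hD : IsTriangleDecomposition G D) :
    (D : Set (Finset V)).PairwiseDisjoint offDiag := by
  intro T₁ hT₁ T₂ hT₂ hne
  refine disjoint_left.2 fun q hq₁ hq₂ => hne ?_
  rw [mem_offDiag] at hq₁ hq₂
  obtain ⟨T, -, hT⟩ := hD.2 _ _ ((hD.1 T₁ hT₁).2 _ hq₁.1 _ hq₁.2.1 hq₁.2.2)
  exact (hT T₁ ⟨hT₁, hq₁.1, hq₁.2.1⟩).trans (hT T₂ ⟨hT₂, hq₂.1, hq₂.2.1⟩).symm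

variable [Fintype V] [DecidableEq V] [DecidableRel G.Adj]

lemma biUnion_offDiag (hD : IsTriangleDecomposition G D) :
    D.biUnion offDiag = ({q : V × V | G.Adj q.1 q.2} : Finset (V × V)) := by
  ext q
  simp only [mem_biUnion, mem_offDiag, mem_filter, mem_univ, true_and]
  constructor
  · rintro ⟨T, hT, h1, h2, hne⟩
    exact (hD.1 T hT).2 _ h1 _ h2 hne
  · intro hadj
    obtain ⟨T, ⟨hT, h1, h2⟩, -⟩ := hD.2 _ _ hadj
    exact ⟨T, hT, h1, h2, hadj.ne⟩

lemma card_filter_adj (hD : IsTriangleDecomposition G D) (p : V × V → Prop) [DecidablePred p] :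
    #{q : V × V | G.Adj q.1 q.2 ∧ p q} = ∑ T ∈ D, #{q ∈ T.offDiag | p q} := by
  rw [← card_biUnion, ← filter_biUnion, hD.biUnion_offDiag, filter_filter]
  exact fun T₁ hT₁ T₂ hT₂ hne => disjoint_filter_filter (hD.pairwiseDisjoint_offDiag hT₁ hT₂ hne)

end IsTriangleDecomposition

lemma SimpleGraph.card_filter_adj {V : Type*} [Fintype V] (G : SimpleGraph V) [DecidableRel G.Adj] :
    #{q : V × V | G.Adj q.1 q.2} = 2 * #G.edgeFinset := by
  rw [← G.dart_card_eq_twice_card_edges, ← Fintype.card_subtype]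
  exact Fintype.card_congr ⟨fun q => ⟨q.1, q.2⟩, fun d => ⟨d.toProd, d.adj⟩, fun _ => rfl,
    fun _ => rfl⟩

def leftCard {α β : Type*} (T : Finset (α ⊕ β)) : ℕ := #{x ∈ T | x.isLeft}

section joinK

variable {V : Type*} [Fintype V] (L : SimpleGraph V) (w : ℕ) [DecidableRel (joinK L w).Adj]

lemma card_joinK_adj_left_right :
    #{q : (V ⊕ Fin w) × (V ⊕ Fin w) | (joinK L w).Adj q.1 q.2 ∧ q.1.isLeft ∧ ¬q.2.isLeft}
      = Fintype.card V * w := calc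
  _ = #((univ : Finset (V × Fin w)).map (.prodMap .inl .inr)) := by
    congr 1
    ext ⟨x | x, y | y⟩ <;> simp only [mem_filter, mem_univ, true_and] <;> simp [joinK]
  _ = _ := by simp

lemma card_joinK_adj_left_left [DecidableRel L.Adj] :
    #{q : (V ⊕ Fin w) × (V ⊕ Fin w) | (joinK L w).Adj q.1 q.2 ∧ q.1.isLeft ∧ q.2.isLeft}
      = 2 * #L.edgeFinset := by
  rw [← L.card_filter_adj, ← card_map (.prodMap .inl (.inl : V ↪ V ⊕ Fin w))]
  congr 1
  ext ⟨x | x, y | y⟩ <;> simp only [mem_filter, mem_univ, true_and] <;> simp [joinK]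

lemma card_joinK_adj_right_right :
    #{q : (V ⊕ Fin w) × (V ⊕ Fin w) | (joinK L w).Adj q.1 q.2 ∧ ¬q.1.isLeft ∧ ¬q.2.isLeft}
      = w * w - w := calc
  _ = #((univ : Finset (Fin w)).offDiag.map (.prodMap .inr .inr)) := by
    congr 1
    ext ⟨x | x, y | y⟩ <;> simp only [mem_filter, mem_univ, true_and] <;> simp [joinK]
  _ = _ := by simp [offDiag_card]

end joinK

namespace IsTriangleDecomposition

variable {V : Type*} {L : SimpleGraph V} {w : ℕ} {D : Finset (Finset (V ⊕ Fin w))}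

lemma leftCard_add_card_filter_not_isLeft (hD : IsTriangleDecomposition (joinK L w) D)
    {T : Finset (V ⊕ Fin w)} (hT : T ∈ D) :
    leftCard T + #{x ∈ T | ¬x.isLeft} = 3 :=
  (card_filter_add_card_filter_not _).trans (hD.1 T hT).1

variable [Fintype V] [DecidableEq V] [DecidableRel (joinK L w).Adj]

lemma sum_leftCard_mul_eq (hD : IsTriangleDecomposition (joinK L w) D) :
    ∑ T ∈ D, leftCard T * (3 - leftCard T) = Fintype.card V * w := by
  rw [← card_joinK_adj_left_right L w, hD.card_filter_adj]
  refine sum_congr rfl fun T hT => ?_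
  rw [card_filter_offDiag_and_not T (fun x => x.isLeft),
    ← hD.leftCard_add_card_filter_not_isLeft hT, Nat.add_sub_cancel_left, leftCard]

lemma sum_leftCard_mul_self_sub_eq [DecidableRel L.Adj]
    (hD : IsTriangleDecomposition (joinK L w) D) :
    ∑ T ∈ D, (leftCard T * leftCard T - leftCard T) = 2 * #L.edgeFinset := by
  rw [← card_joinK_adj_left_left L w, hD.card_filter_adj]
  exact sum_congr rfl fun T _ => (card_filter_offDiag_and _ _).symm

lemma sum_three_sub_leftCard_mul_self_sub_eq (hD : IsTriangleDecomposition (joinK L w) D) :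
    ∑ T ∈ D, ((3 - leftCard T) * (3 - leftCard T) - (3 - leftCard T)) = w * w - w := by
  rw [← card_joinK_adj_right_right L w, hD.card_filter_adj]
  refine sum_congr rfl fun T hT => ?_
  rw [card_filter_offDiag_and T fun x : V ⊕ Fin w => ¬x.isLeft,
    ← hD.leftCard_add_card_filter_not_isLeft hT, Nat.add_sub_cancel_left]

end IsTriangleDecomposition

section LeftCount

variable {ι : Type*} {D : Finset ι} {a : ι → ℕ}

lemma eq_one_or_eq_two_of_sum_le (ha : ∀ i ∈ D, a i ≤ 3)
    (h : ∑ i ∈ D, ((a i * a i - a i) + ((3 - a i) * (3 - a i) - (3 - a i)))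
      ≤ ∑ i ∈ D, a i * (3 - a i)) :
    ∀ i ∈ D, a i = 1 ∨ a i = 2 := by
  have hle : ∀ i ∈ D, a i * (3 - a i)
      ≤ (a i * a i - a i) + ((3 - a i) * (3 - a i) - (3 - a i)) := fun i hi => by
    have := ha i hi
    interval_cases a i <;> decide
  have heq := (sum_eq_sum_iff_of_le hle).1 (le_antisymm (sum_le_sum hle) h)
  intro i hi
  have := heq i hi
  have := ha i hi
  interval_cases a i <;> simp_all

lemma sum_mul_self_sub_self_eq (h : ∀ i ∈ D, a i = 1 ∨ a i = 2) :
    ∑ i ∈ D, (a i * a i - a i) = 2 * #{i ∈ D | a i = 2} := by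
  rw [card_filter, mul_sum]
  exact sum_congr rfl fun i hi => by rcases h i hi with h | h <;> simp [h]

lemma sum_three_sub_mul_self_sub_self_eq (h : ∀ i ∈ D, a i = 1 ∨ a i = 2) :
    ∑ i ∈ D, ((3 - a i) * (3 - a i) - (3 - a i)) = 2 * #{i ∈ D | a i = 1} := by
  rw [card_filter, mul_sum]
  exact sum_congr rfl fun i hi => by rcases h i hi with h | h <;> simp [h]

end LeftCount

theorem stmt5_general {V : Type*} [Fintype V] (L : SimpleGraph V) (w : ℕ)
    (hE : (L.edgeSet.ncard : ℤ) * 2 = w * ((Fintype.card V : ℤ) - w + 1))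
    (D : Set (Finset (V ⊕ Fin w))) (hD : IsTriangleDecomposition (joinK L w) D) :
    (∀ T ∈ D, (T.filter (fun x => x.isLeft = true)).card = 1 ∨
      (T.filter (fun x => x.isLeft = true)).card = 2) ∧
    {T ∈ D | (T.filter (fun x => x.isLeft = true)).card = 2}.ncard = L.edgeSet.ncard ∧
    {T ∈ D | (T.filter (fun x => x.isLeft = true)).card = 1}.ncard = w.choose 2 := by
  classical
  obtain ⟨D, rfl⟩ := D.toFinite.exists_finset_coe
  have left := hD.sum_leftCard_mul_self_sub_eq
  have right := hD.sum_three_sub_leftCard_mul_self_sub_eq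
  rw [← Set.ncard_coe_finset, SimpleGraph.coe_edgeFinset] at left
  have pure : 2 * L.edgeSet.ncard + (w * w - w) = Fintype.card V * w := by
    zify [Nat.le_mul_self w]
    linear_combination hE
  have h12 := eq_one_or_eq_two_of_sum_le
    (fun T hT => (Nat.le_add_right _ _).trans (hD.leftCard_add_card_filter_not_isLeft hT).le)
    (by rw [sum_add_distrib, left, right, pure, hD.sum_leftCard_mul_eq])
  rw [sum_mul_self_sub_self_eq h12] at left
  rw [sum_three_sub_mul_self_sub_self_eq h12, ← Nat.mul_sub_one] at right
  rw [← Set.ncard_coe_finset, coe_filter] at left right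
  refine ⟨h12, Nat.eq_of_mul_eq_mul_left two_pos left, ?_⟩
  rw [Nat.choose_two_right, ← right, Nat.mul_div_cancel_left _ two_pos]
  rfl

/-- If `w` is even and positive, `u = |V(L)|` is odd, `L` is even with
`|E(L)| = w(u-w+1)/2`, and `D` is a K₃-decomposition of `L ∨ K_w`, then every triangle of
`D` has exactly one or two vertices in `V(L)`, exactly `|E(L)|` triangles have two
vertices in `V(L)`, and exactly `C(w,2)` triangles have one vertex in `V(L)`. -/
theorem stmt5 {V : Type*} [Fintype V] (L : SimpleGraph V) (w : ℕ)
    (hwpos : 0 < w) (hwe : Even w) (hodd : Odd (Fintype.card V))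
    (heven : ∀ v : V, Even (L.neighborSet v).ncard)
    (hE : (L.edgeSet.ncard : ℤ) * 2 = w * ((Fintype.card V : ℤ) - w + 1))
    (D : Set (Finset (V ⊕ Fin w))) (hD : IsTriangleDecomposition (joinK L w) D) :
    (∀ T ∈ D, (T.filter (fun x => x.isLeft = true)).card = 1 ∨
      (T.filter (fun x => x.isLeft = true)).card = 2) ∧
    {T ∈ D | (T.filter (fun x => x.isLeft = true)).card = 2}.ncard = L.edgeSet.ncard ∧
    {T ∈ D | (T.filter (fun x => x.isLeft = true)).card = 1}.ncard = w.choose 2 :=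
  stmt5_general L w hE D hD
end
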